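/- For any positive integer N and any matrices B_1,…,B_N ∈ ℝ^{d×r} and A_1,…,A_N ∈ ℝ^{r×d}, the squared Frobenius norm of the aggregation error satisfies ‖E‖_F² ≤ ( (1/(2N²)) ∑_{i,j=1}^N ‖B_i − B_j‖_F² ) · ( (1/(2N²)) ∑_{i,j=1}^N ‖A_i − A_j‖_F² ). -/

import Mathlib

open scoped BigOperators

noncomputable def frob {m n : Type*} [Fintype m] [Fintype n] (M : Matrix m n ℝ) : ℝ :=
  Real.sqrt (∑ i, ∑ j, (M i j) ^ 2)

/-! Writing `xᵢ = Bᵢ - 𝔼 B` and `yᵢ = Aᵢ - 𝔼 A`, the aggregation error is the covariance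
`-𝔼 xᵢ yᵢ`. The triangle inequality, submultiplicativity of the Frobenius norm and Cauchy–Schwarz
bound its square by `𝔼 ‖xᵢ‖² · 𝔼 ‖yᵢ‖²`, and each factor is half the mean pairwise squared
distance `𝔼ᵢ 𝔼ⱼ ‖Bᵢ - Bⱼ‖²` (resp. for `A`). -/

open Finset

theorem Fintype.sum_sum_sub_sq {ι R : Type*} [Fintype ι] [CommRing R] (a : ι → R) :
    ∑ i, ∑ j, (a i - a j) ^ 2 = 2 * Fintype.card ι * ∑ i, a i ^ 2 - 2 * (∑ i, a i) ^ 2 := by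
  simp only [sub_sq, sum_add_distrib, sum_sub_distrib, sum_const, card_univ, nsmul_eq_mul]
  rw [sq (∑ i, a i), sum_mul_sum]
  simp only [mul_assoc, ← mul_sum]
  ring

section Expectation

variable {ι : Type*} [Fintype ι]

theorem Fintype.expect_eq_inv_card_smul_sum {M : Type*} (𝕜 : Type*) [DivisionSemiring 𝕜]
    [CharZero 𝕜] [AddCommMonoid M] [Module 𝕜 M] [Module ℚ≥0 M] (f : ι → M) :
    𝔼 i, f i = (Fintype.card ι : 𝕜)⁻¹ • ∑ i, f i := by
  rw [expect_univ, ← NNRat.cast_smul_eq_nnqsmul 𝕜, NNRat.cast_inv, NNRat.cast_natCast]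

theorem Fintype.expect_sub_expect_eq_zero {M : Type*} [AddCommGroup M] [Module ℚ≥0 M]
    (x : ι → M) : 𝔼 i, (x i - 𝔼 j, x j) = 0 := by
  cases isEmpty_or_nonempty ι
  · simp [expect]
  rw [expect_sub_distrib, Fintype.expect_const, sub_self]

theorem Fintype.norm_expect_le {E : Type*} [SeminormedAddCommGroup E] [NormedSpace ℝ E]
    [Module ℚ≥0 E] (f : ι → E) : ‖𝔼 i, f i‖ ≤ 𝔼 i, ‖f i‖ := by
  rw [Fintype.expect_eq_inv_card_smul_sum ℝ, Fintype.expect_eq_inv_card_smul_sum ℝ, norm_smul,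
    norm_inv, Real.norm_natCast, smul_eq_mul]
  gcongr
  exact norm_sum_le _ _

variable {𝕜 m n p : Type*} [DivisionRing 𝕜] [CharZero 𝕜] [Fintype n]

theorem Matrix.expect_mul (B : ι → Matrix m n 𝕜) (A : Matrix n p 𝕜) :
    (𝔼 i, B i) * A = 𝔼 i, B i * A := by
  rw [expect, expect, Matrix.smul_mul, Matrix.sum_mul]

theorem Matrix.mul_expect (B : Matrix m n 𝕜) (A : ι → Matrix n p 𝕜) :
    B * 𝔼 i, A i = 𝔼 i, B * A i := by
  rw [expect, expect, Matrix.mul_smul, Matrix.mul_sum]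

theorem Matrix.expect_mul_expect_sub_expect_mul (B : ι → Matrix m n 𝕜) (A : ι → Matrix n p 𝕜) :
    (𝔼 i, B i) * (𝔼 i, A i) - 𝔼 i, B i * A i
      = -𝔼 i, (B i - 𝔼 j, B j) * (A i - 𝔼 j, A j) := by
  have hcentered : 𝔼 i, (B i - 𝔼 j, B j) * (A i - 𝔼 j, A j)
      = 𝔼 i, B i * A i - (𝔼 i, B i) * (𝔼 i, A i) := by
    simp only [Matrix.mul_sub, expect_sub_distrib]
    rw [← Matrix.expect_mul (fun i => B i - 𝔼 j, B j), Fintype.expect_sub_expect_eq_zero,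
      Matrix.zero_mul, sub_zero]
    simp only [Matrix.sub_mul, expect_sub_distrib, ← Matrix.mul_expect]
  rw [hcentered, neg_sub]

end Expectation

section Frobenius

attribute [local instance] Matrix.frobeniusNormedAddCommGroup Matrix.frobeniusNormedSpace

variable {ι m n p : Type*} [Fintype ι] [Fintype m] [Fintype n] [Fintype p]

theorem frob_eq_norm (M : Matrix m n ℝ) : frob M = ‖M‖ := by
  rw [Matrix.frobenius_norm_def, frob, Real.sqrt_eq_rpow]
  simp_rw [Real.norm_eq_abs, Real.rpow_two, sq_abs]

theorem frob_neg (M : Matrix m n ℝ) : frob (-M) = frob M := by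
  rw [frob_eq_norm, frob_eq_norm, norm_neg]

theorem frob_sq (M : Matrix m n ℝ) : frob M ^ 2 = ∑ i, ∑ j, M i j ^ 2 :=
  Real.sq_sqrt (by positivity)

theorem frob_expect_mul_sq_le (X : ι → Matrix m n ℝ) (Y : ι → Matrix n p ℝ) :
    frob (𝔼 i, X i * Y i) ^ 2 ≤ (𝔼 i, frob (X i) ^ 2) * 𝔼 i, frob (Y i) ^ 2 := by
  have htriangle : frob (𝔼 i, X i * Y i) ≤ 𝔼 i, frob (X i) * frob (Y i) := by
    simp only [frob_eq_norm]
    exact (Fintype.norm_expect_le _).trans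
      (expect_le_expect fun i _ => Matrix.frobenius_norm_mul _ _)
  calc frob (𝔼 i, X i * Y i) ^ 2 ≤ (𝔼 i, frob (X i) * frob (Y i)) ^ 2 :=
        pow_le_pow_left₀ (Real.sqrt_nonneg _) htriangle 2
    _ ≤ _ := expect_mul_sq_le_sq_mul_sq _ _ _

theorem sum_sum_frob_sub_sq (X : ι → Matrix m n ℝ) :
    ∑ i, ∑ j, frob (X i - X j) ^ 2
      = 2 * Fintype.card ι * ∑ i, frob (X i) ^ 2 - 2 * frob (∑ i, X i) ^ 2 := by
  calc ∑ i, ∑ j, frob (X i - X j) ^ 2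
      = ∑ p, ∑ q, ∑ i, ∑ j, (X i p q - X j p q) ^ 2 := by
        simp only [frob_sq, Matrix.sub_apply,
          sum_comm (s := (univ : Finset ι)) (t := (univ : Finset m)),
          sum_comm (s := (univ : Finset ι)) (t := (univ : Finset n))]
    _ = ∑ p, ∑ q, (2 * Fintype.card ι * ∑ i, X i p q ^ 2 - 2 * (∑ i, X i p q) ^ 2) := by
        simp only [Fintype.sum_sum_sub_sq]
    _ = _ := by
        simp only [frob_sq, Matrix.sum_apply, sum_sub_distrib, ← mul_sum,
          sum_comm (s := (univ : Finset ι)) (t := (univ : Finset m)),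
          sum_comm (s := (univ : Finset ι)) (t := (univ : Finset n))]

theorem expect_expect_frob_sub_sq (X : ι → Matrix m n ℝ) :
    𝔼 i, 𝔼 j, frob (X i - X j) ^ 2 = 2 * 𝔼 i, frob (X i - 𝔼 j, X j) ^ 2 := by
  cases isEmpty_or_nonempty ι
  · simp [expect]
  have hcentered : ∑ i, (X i - 𝔼 j, X j) = 0 := by
    rw [← Fintype.card_smul_expect, Fintype.expect_sub_expect_eq_zero, smul_zero]
  have hsum := sum_sum_frob_sub_sq (fun i => X i - 𝔼 j, X j)
  simp only [sub_sub_sub_cancel_right, hcentered, frob_eq_norm 0, norm_zero,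
    zero_pow two_ne_zero, mul_zero, sub_zero] at hsum
  simp only [Fintype.expect_eq_inv_card_smul_sum ℝ, smul_eq_mul, ← mul_sum, hsum]
  field_simp

end Frobenius

theorem aggregation_error_sq_bound_general (N d r : ℕ)
    (B : Fin N → Matrix (Fin d) (Fin r) ℝ) (A : Fin N → Matrix (Fin r) (Fin d) ℝ) :
    frob (((N : ℝ)⁻¹ • ∑ i, B i) * ((N : ℝ)⁻¹ • ∑ i, A i) - (N : ℝ)⁻¹ • ∑ i, B i * A i) ^ 2
      ≤ ((1 / (2 * (N : ℝ) ^ 2)) * ∑ i, ∑ j, frob (B i - B j) ^ 2)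
        * ((1 / (2 * (N : ℝ) ^ 2)) * ∑ i, ∑ j, frob (A i - A j) ^ 2) := by
  have hmean {α : Type} [AddCommMonoid α] [Module ℝ α] [Module ℚ≥0 α] (f : Fin N → α) :
      (N : ℝ)⁻¹ • ∑ i, f i = 𝔼 i, f i := by
    rw [Fintype.expect_eq_inv_card_smul_sum ℝ, Fintype.card_fin]
  have hpairs (f : Fin N → Fin N → ℝ) :
      1 / (2 * (N : ℝ) ^ 2) * ∑ i, ∑ j, f i j = 2⁻¹ * 𝔼 i, 𝔼 j, f i j := by
    simp only [← hmean, smul_eq_mul, ← mul_sum]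
    ring
  rw [hmean, hmean, hmean, hpairs, hpairs, expect_expect_frob_sub_sq, expect_expect_frob_sub_sq,
    Matrix.expect_mul_expect_sub_expect_mul, frob_neg]
  exact (frob_expect_mul_sq_le _ _).trans_eq (by ring)

/-- Cauchy–Schwarz-type bound on the squared Frobenius norm of the
aggregation error:
`‖E‖_F² ≤ ((1/(2N²)) ∑ᵢⱼ ‖Bᵢ−Bⱼ‖_F²) · ((1/(2N²)) ∑ᵢⱼ ‖Aᵢ−Aⱼ‖_F²)`. -/
theorem aggregation_error_sq_bound (N d r : ℕ) (hN : 0 < N)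
    (B : Fin N → Matrix (Fin d) (Fin r) ℝ) (A : Fin N → Matrix (Fin r) (Fin d) ℝ) :
    frob (((N : ℝ)⁻¹ • ∑ i, B i) * ((N : ℝ)⁻¹ • ∑ i, A i) - (N : ℝ)⁻¹ • ∑ i, B i * A i) ^ 2
      ≤ ((1 / (2 * (N : ℝ) ^ 2)) * ∑ i, ∑ j, frob (B i - B j) ^ 2)
        * ((1 / (2 * (N : ℝ) ^ 2)) * ∑ i, ∑ j, frob (A i - A j) ^ 2) :=
  aggregation_error_sq_bound_general N d r B A
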